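/- For every integer n ≥ 1, twice the number of Catalan words of length n avoiding the vincular pattern 3-12 equals 3^{n−1} + 1. -/
import Mathlib


/-- A Catalan word: a word of positive integers starting with 1 in which each
letter exceeds its predecessor by at most 1. -/
def IsCatalanWord {n : ℕ} (w : Fin n → ℕ) : Prop :=
  (∀ i, 1 ≤ w i) ∧ (∀ h : 0 < n, w ⟨0, h⟩ = 1) ∧
  ∀ i : ℕ, ∀ h : i + 1 < n, w ⟨i + 1, h⟩ ≤ w ⟨i, by omega⟩ + 1

/-- `w` contains the vincular pattern 3-12: there are indices `i < j` with
`w j < w (j+1) < w i`. -/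
def Contains3_12 {n : ℕ} (w : Fin n → ℕ) : Prop :=
  ∃ i j : ℕ, ∃ hj : j + 1 < n, ∃ hij : i < j,
    w ⟨j, by omega⟩ < w ⟨j + 1, hj⟩ ∧ w ⟨j + 1, hj⟩ < w ⟨i, by omega⟩

open Finset

def H : ℕ → ℕ → ℕ → ℕ
  | 0, _, _ => 1
  | k+1, a, m => (∑ b ∈ Finset.Icc 1 a, H k b (max m b)) +
      if m ≤ a + 1 then H k (a+1) (max m (a+1)) else 0

def T (k r : ℕ) : ℕ := ∑ j ∈ Finset.range (k+1), 2^j * (k+r).choose (j+r)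

lemma T_zero (r : ℕ) : T 0 r = 1 := by simp [T]

lemma T_r_zero (k : ℕ) : T k 0 = 3 ^ k := by
  have h := add_pow 2 1 k (R := ℕ)
  simp only [one_pow, mul_one, two_add_one_eq_three] at h
  simpa [T] using h.symm

lemma sum_choose_hs (k c : ℕ) : ∑ d ∈ Finset.range c, (k+d).choose k = (k+c).choose (k+1) := by
  induction c with
  | zero => simp
  | succ c ih =>
    rw [Finset.sum_range_succ, ih]
    have h1 : k + (c+1) = (k + c) + 1 := by omega
    rw [h1, Nat.choose_succ_succ' (k+c) k]
    omega

lemma two_S (k r : ℕ) :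
    2 * (∑ j ∈ range (k+1), 2^j * (k+r).choose (j+r+1)) + (k+r).choose r = T k r := by
  have h1 : ∑ i ∈ range (k+2), 2^i * (k+r).choose (i+r)
      = ∑ j ∈ range (k+1), 2^(j+1) * (k+r).choose ((j+1)+r) + 2^0 * (k+r).choose (0+r) :=
    Finset.sum_range_succ' _ _
  have h2 : ∑ i ∈ range (k+2), 2^i * (k+r).choose (i+r)
      = T k r + 2^(k+1) * (k+r).choose (k+1+r) := Finset.sum_range_succ _ _
  have h3 : (k+r).choose (k+1+r) = 0 := Nat.choose_eq_zero_of_lt (by omega)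
  rw [h3, mul_zero, add_zero] at h2
  rw [h2] at h1
  have h4 : ∑ j ∈ range (k+1), 2^(j+1) * (k+r).choose ((j+1)+r)
      = 2 * ∑ j ∈ range (k+1), 2^j * (k+r).choose (j+r+1) := by
    rw [Finset.mul_sum]
    refine Finset.sum_congr rfl fun j _ => ?_
    have : j + 1 + r = j + r + 1 := by omega
    rw [this]; ring
  rw [h4] at h1
  simp only [pow_zero, one_mul, Nat.zero_add] at h1
  omega

lemma T_succ_r (k r : ℕ) :
    T k (r+1) = T k r + ∑ j ∈ range (k+1), 2^j * (k+r).choose (j+r+1) := by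
  rw [T, T, ← Finset.sum_add_distrib]
  refine Finset.sum_congr rfl fun j _ => ?_
  have h1 : k + (r+1) = (k+r) + 1 := by omega
  have h2 : j + (r+1) = (j+r) + 1 := by omega
  rw [h1, h2, Nat.choose_succ_succ' (k+r) (j+r)]
  ring

lemma T_D (k r : ℕ) : 2 * T k (r+1) + (k+r).choose r = 3 * T k r := by
  have h1 := two_S k r
  have h2 := T_succ_r k r
  omega

lemma choose_B (k r : ℕ) : (k+r+1).choose r = (k+r).choose (k+1) + (k+r).choose r := by
  cases r with
  | zero => simp [Nat.choose_eq_zero_of_lt]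
  | succ s =>
    have e1 : k + (s+1) + 1 = (k+s+1) + 1 := by omega
    have e2 : k + (s+1) = k + s + 1 := by omega
    rw [e1, e2, Nat.choose_succ_succ' (k+s+1) s]
    have h2 : (k+s+1).choose s = (k+s+1).choose (k+1) := by
      have h3 := (Nat.choose_symm (show k+1 ≤ k+s+1 by omega)).symm
      have e : (k+s+1)-(k+1) = s := by omega
      rw [e] at h3
      exact h3.symm
    omega

lemma T_step (k r : ℕ) : T (k+1) r + (k+r).choose r = (k+r+1).choose r + 3 * T k r := by
  have h0 : T (k+1) r
      = ∑ j ∈ range (k+1), 2^(j+1) * (k+1+r).choose ((j+1)+r) + 2^0 * (k+1+r).choose (0+r) :=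
    Finset.sum_range_succ' _ _
  have h1 : ∑ j ∈ range (k+1), 2^(j+1) * (k+1+r).choose ((j+1)+r)
      = 2 * T k r + 2 * ∑ j ∈ range (k+1), 2^j * (k+r).choose (j+r+1) := by
    rw [T, Finset.mul_sum, Finset.mul_sum, ← Finset.sum_add_distrib]
    refine Finset.sum_congr rfl fun j _ => ?_
    have e1 : k + 1 + r = (k+r) + 1 := by omega
    have e2 : j + 1 + r = (j+r) + 1 := by omega
    rw [e1, e2, Nat.choose_succ_succ' (k+r) (j+r)]
    ring
  have h2 := two_S k r
  have e3 : (k+1+r).choose (0+r) = (k+r+1).choose r := by congr 1 <;> omega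
  rw [h1, e3] at h0
  simp only [pow_zero, one_mul] at h0
  omega

lemma sum_Icc_one (f : ℕ → ℕ) (a : ℕ) : ∑ b ∈ Icc 1 a, f b = ∑ d ∈ range a, f (d+1) := by
  induction a with
  | zero => simp
  | succ a ih =>
    rw [Finset.sum_Icc_succ_top (by omega), ih, Finset.sum_range_succ]

lemma dead_sum (k a m : ℕ) (hm : a + 1 ≤ m)
    (ih : ∀ b m', 1 ≤ b → b + 2 ≤ m' → H k b m' = (k + b - 1).choose k)
    (hm2 : a + 2 ≤ m ∨ a = 0) :
    ∑ b ∈ Icc 1 a, H k b (max m b) = (k+a).choose (k+1) := by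
  have h1 : ∀ b ∈ Icc 1 a, H k b (max m b) = (k+b-1).choose k := by
    intro b hb
    rw [Finset.mem_Icc] at hb
    have hmax : max m b = m := max_eq_left (by omega)
    rw [hmax]
    exact ih b m hb.1 (by omega)
  rw [Finset.sum_congr rfl h1, sum_Icc_one]
  have h2 : ∀ d ∈ range a, (k+(d+1)-1).choose k = (k+d).choose k := by
    intro d _
    have e : k+(d+1)-1 = k+d := by omega
    rw [e]
  rw [Finset.sum_congr rfl h2, sum_choose_hs]

theorem master : ∀ k : ℕ,
    (∀ a m, 1 ≤ a → a + 2 ≤ m → H k a m = (k + a - 1).choose k)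
    ∧ (∀ r, 2 * H k (r+1) (r+2) = T k r + (k+r).choose r)
    ∧ (∀ r, H k (r+2) (r+2) = T k r)
    ∧ (H k 1 1 = H k 1 2)
  | 0 => by
    refine ⟨fun a m _ _ => by simp [H], fun r => by simp [H, T_zero],
      fun r => by simp [H, T_zero], rfl⟩
  | (k+1) => by
    obtain ⟨ih1, ih2, ih3, ih4⟩ := master k
    have key2 : ∀ r, 2 * H (k+1) (r+1) (r+2) = T (k+1) r + (k+1+r).choose r := by
      intro r
      have hH : H (k+1) (r+1) (r+2) = (∑ b ∈ Icc 1 (r+1), H k b (max (r+2) b)) +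
          (if r+2 ≤ (r+1)+1 then H k ((r+1)+1) (max (r+2) ((r+1)+1)) else 0) := rfl
      rw [if_pos (by omega), Finset.sum_Icc_succ_top (show (1:ℕ) ≤ r+1 by omega)] at hH
      rw [show max (r+2) (r+1) = r+2 by omega, show (r+1)+1 = r+2 by omega,
        show max (r+2) (r+2) = r+2 by omega,
        dead_sum k r (r+2) (by omega) ih1 (by omega)] at hH
      have h2 := ih2 r
      have h3 := ih3 r
      have hts := T_step k r
      have hcb := choose_B k r
      rw [show k+1+r = k+r+1 by omega]
      omega
    have key3 : ∀ r, H (k+1) (r+2) (r+2) = T (k+1) r := by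
      intro r
      have hH : H (k+1) (r+2) (r+2) = (∑ b ∈ Icc 1 (r+2), H k b (max (r+2) b)) +
          (if r+2 ≤ (r+2)+1 then H k ((r+2)+1) (max (r+2) ((r+2)+1)) else 0) := rfl
      rw [if_pos (by omega), Finset.sum_Icc_succ_top (show (1:ℕ) ≤ (r+1)+1 by omega),
        Finset.sum_Icc_succ_top (show (1:ℕ) ≤ r+1 by omega)] at hH
      rw [show (r+1)+1 = r+2 by omega, show (r+2)+1 = r+3 by omega,
        show max (r+2) (r+1) = r+2 by omega, show max (r+2) (r+2) = r+2 by omega,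
        show max (r+2) (r+3) = r+3 by omega,
        dead_sum k r (r+2) (by omega) ih1 (by omega)] at hH
      have h2 := ih2 r
      have h3 := ih3 r
      have h3' : H k (r+3) (r+3) = T k (r+1) := by
        have := ih3 (r+1)
        rwa [show r+1+2 = r+3 by omega] at this
      have hts := T_step k r
      have hcb := choose_B k r
      have htd := T_D k r
      omega
    refine ⟨?_, key2, key3, ?_⟩
    · intro a m ha hm
      have hH : H (k+1) a m = (∑ b ∈ Icc 1 a, H k b (max m b)) +
          (if m ≤ a+1 then H k (a+1) (max m (a+1)) else 0) := rfl
      rw [if_neg (by omega), add_zero, dead_sum k a m (by omega) ih1 (by omega)] at hH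
      rw [hH]
      congr 1
      omega
    · have h1 : H (k+1) 1 1 = (∑ b ∈ Icc 1 1, H k b (max 1 b)) +
          (if 1 ≤ 1+1 then H k (1+1) (max 1 (1+1)) else 0) := rfl
      have h2 : H (k+1) 1 2 = (∑ b ∈ Icc 1 1, H k b (max 2 b)) +
          (if 2 ≤ 1+1 then H k (1+1) (max 2 (1+1)) else 0) := rfl
      rw [if_pos (by omega)] at h1
      rw [if_pos (by omega)] at h2
      simp only [Finset.Icc_self, Finset.sum_singleton] at h1 h2
      rw [show max 1 1 = 1 by omega, show max 1 (1+1) = 2 by omega,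
        show (1:ℕ)+1 = 2 by omega] at h1
      rw [show max 2 1 = 2 by omega, show max 2 (1+1) = 2 by omega,
        show (1:ℕ)+1 = 2 by omega] at h2
      rw [h1, h2, ih4]

theorem two_H (k : ℕ) : 2 * H k 1 1 = 3 ^ k + 1 := by
  rw [(master k).2.2.2, (master k).2.1 0]
  simp [T_r_zero]

/-- Non-dependent cons for words. -/
def cns {k : ℕ} (b : ℕ) (x : Fin k → ℕ) : Fin (k+1) → ℕ :=
  Fin.cons (α := fun _ => ℕ) b x

lemma cns_inj {k : ℕ} (b : ℕ) : Function.Injective (cns (k := k) b) :=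
  fun x y h => Fin.cons_right_injective (α := fun _ => ℕ) b h

lemma cns_mk_zero {k : ℕ} (a : ℕ) (x : Fin k → ℕ) (h : 0 < k + 1) :
    cns a x ⟨0, h⟩ = a := rfl

lemma cns_zero {k : ℕ} (a : ℕ) (x : Fin k → ℕ) : cns a x 0 = a := rfl

lemma cns_mk_succ {k : ℕ} (a : ℕ) (x : Fin k → ℕ) (j : ℕ) (h : j + 1 < k + 1) :
    cns a x ⟨j+1, h⟩ = x ⟨j, by omega⟩ := by
  show Fin.cons (α := fun _ => ℕ) a x ⟨j+1, h⟩ = _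
  rw [← Fin.succ_mk, Fin.cons_succ]

lemma cns_tail {k : ℕ} (w : Fin (k+1) → ℕ) : cns (w 0) (Fin.tail w) = w :=
  Fin.cons_self_tail (α := fun _ => ℕ) w

/-- Finset of valid continuations of length k from state (a, m). -/
def F : (k : ℕ) → ℕ → ℕ → Finset (Fin k → ℕ)
  | 0, _, _ => {![]}
  | k+1, a, m =>
      ((Finset.Icc 1 a).biUnion fun b => (F k b (max m b)).image (cns b)) ∪
      (if m ≤ a + 1 then (F k (a+1) (max m (a+1))).image (cns (a+1)) else ∅)

lemma card_F : ∀ k a m, (F k a m).card = H k a m := by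
  intro k
  induction k with
  | zero => intro a m; simp [F, H]
  | succ k ih =>
    intro a m
    have hcard1 : ∀ b m', ((F k b m').image (cns b)).card = H k b m' := by
      intro b m'
      rw [Finset.card_image_of_injective _ (cns_inj b), ih]
    have hdisj : ∀ (s : Finset (Fin k → ℕ)) b (t : Finset (Fin k → ℕ)) b', b ≠ b' →
        Disjoint (s.image (cns b)) (t.image (cns b')) := by
      intro s b t b' hbb
      rw [Finset.disjoint_left]
      rintro x hx hx'
      simp only [Finset.mem_image] at hx hx'
      obtain ⟨u, _, rfl⟩ := hx
      obtain ⟨v, _, hv⟩ := hx'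
      exact hbb ((cns_zero b u) ▸ (cns_zero b' v) ▸ (congrFun hv 0)).symm
    show (((Finset.Icc 1 a).biUnion fun b => (F k b (max m b)).image (cns b)) ∪
      (if m ≤ a + 1 then (F k (a+1) (max m (a+1))).image (cns (a+1)) else ∅)).card = _
    rw [Finset.card_union_of_disjoint, Finset.card_biUnion]
    · show _ + _ = (∑ b ∈ Finset.Icc 1 a, H k b (max m b)) + _
      congr 1
      · exact Finset.sum_congr rfl fun b _ => hcard1 _ _
      · split
        · exact hcard1 _ _
        · simp
    · intro b hb b' hb' hbb
      exact hdisj _ _ _ _ hbb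
    · rw [Finset.disjoint_left]
      rintro x hx hx'
      rw [Finset.mem_biUnion] at hx
      obtain ⟨b, hb, hxb⟩ := hx
      rw [Finset.mem_Icc] at hb
      split at hx'
      · have h1 : x 0 = b := by
          rw [Finset.mem_image] at hxb
          obtain ⟨u, _, rfl⟩ := hxb
          rfl
        have h2 : x 0 = a + 1 := by
          rw [Finset.mem_image] at hx'
          obtain ⟨u, _, hu⟩ := hx'
          rw [← hu]
          rfl
        omega
      · simp at hx'

/-- The local "good continuation" condition for the word `cns a x`, with previous
prefix maximum `m`. -/
def Gd (a m : ℕ) {k : ℕ} (x : Fin k → ℕ) : Prop :=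
  ∀ j : ℕ, ∀ h : j + 1 < k + 1,
    cns a x ⟨j+1, h⟩ ≤ cns a x ⟨j, by omega⟩ + 1 ∧
    (cns a x ⟨j, by omega⟩ < cns a x ⟨j+1, h⟩ →
      m ≤ cns a x ⟨j+1, h⟩ ∧ ∀ i, ∀ _hij : i ≤ j, cns a x ⟨i, by omega⟩ ≤ cns a x ⟨j+1, h⟩)

lemma mem_F_succ {k a m : ℕ} (x : Fin (k+1) → ℕ) :
    x ∈ F (k+1) a m ↔ ∃ b t, ((1 ≤ b ∧ b ≤ a) ∨ (b = a+1 ∧ m ≤ a+1)) ∧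
      t ∈ F k b (max m b) ∧ x = cns b t := by
  show x ∈ ((Finset.Icc 1 a).biUnion fun b => (F k b (max m b)).image (cns b)) ∪
      (if m ≤ a + 1 then (F k (a+1) (max m (a+1))).image (cns (a+1)) else ∅) ↔ _
  rw [Finset.mem_union, Finset.mem_biUnion]
  constructor
  · rintro (⟨b, hb, hx⟩ | hx)
    · rw [Finset.mem_Icc] at hb
      rw [Finset.mem_image] at hx
      obtain ⟨t, ht, rfl⟩ := hx
      exact ⟨b, t, Or.inl hb, ht, rfl⟩
    · split at hx
      · rw [Finset.mem_image] at hx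
        obtain ⟨t, ht, rfl⟩ := hx
        exact ⟨a+1, t, Or.inr ⟨rfl, by assumption⟩, ht, rfl⟩
      · simp at hx
  · rintro ⟨b, t, (hb | hb), ht, rfl⟩
    · exact Or.inl ⟨b, Finset.mem_Icc.mpr hb, Finset.mem_image_of_mem _ ht⟩
    · refine Or.inr ?_
      rw [if_pos hb.2, hb.1]
      exact Finset.mem_image_of_mem _ (hb.1 ▸ ht)

lemma cns_succ {k : ℕ} (a : ℕ) (x : Fin k → ℕ) (i : Fin k) : cns a x i.succ = x i :=
  Fin.cons_succ (α := fun _ => ℕ) a x i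

lemma one_le_cns {k : ℕ} {a : ℕ} {x : Fin k → ℕ} (ha : 1 ≤ a) (hx : ∀ i, 1 ≤ x i) :
    ∀ i, 1 ≤ cns a x i := by
  intro i
  induction i using Fin.cases with
  | zero => exact cns_zero a x ▸ ha
  | succ i => rw [cns_succ]; exact hx i

set_option maxHeartbeats 2000000 in
theorem mem_F_iff : ∀ (k : ℕ) (a m : ℕ), 1 ≤ a → a ≤ m → ∀ x : Fin k → ℕ,
    (x ∈ F k a m ↔ ((∀ i, 1 ≤ x i) ∧ Gd a m x)) := by
  intro k
  induction k with
  | zero =>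
    intro a m ha ham x
    constructor
    · intro _
      exact ⟨fun i => i.elim0, fun j h => by omega⟩
    · intro _
      show x ∈ ({![]} : Finset (Fin 0 → ℕ))
      have : x = ![] := by
        funext i; exact i.elim0
      simp [this]
  | succ k ih =>
    intro a m ha ham x
    rw [mem_F_succ]
    constructor
    · rintro ⟨b, t, hb, ht, rfl⟩
      have hb1 : 1 ≤ b := by rcases hb with h | h <;> omega
      obtain ⟨ht1, ht2⟩ := (ih b (max m b) hb1 (le_max_right _ _) t).mp ht
      refine ⟨one_le_cns hb1 ht1, ?_⟩
      intro j h
      match j, h with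
      | 0, h =>
        rw [cns_mk_succ, cns_mk_zero, cns_mk_zero]
        refine ⟨by rcases hb with h' | h' <;> omega, ?_⟩
        intro hab
        have hb2 : b = a + 1 ∧ m ≤ a + 1 := by rcases hb with h' | h' <;> [omega; exact h']
        refine ⟨by omega, ?_⟩
        intro i hi
        interval_cases i
        rw [cns_mk_zero]
        omega
      | (j'+1), h =>
        have h' : j' + 1 < k + 1 := by omega
        obtain ⟨hs1, hs2⟩ := ht2 j' h'
        rw [cns_mk_succ, cns_mk_succ, cns_mk_succ]
        refine ⟨hs1, ?_⟩
        intro hasc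
        obtain ⟨hm, hall⟩ := hs2 hasc
        refine ⟨le_trans (le_max_left _ _) hm, ?_⟩
        intro i hi
        match i, hi with
        | 0, _ =>
          rw [cns_mk_zero]
          exact le_trans ham (le_trans (le_max_left _ _) hm)
        | (i'+1), hi =>
          rw [cns_mk_succ]
          exact hall i' (by omega)
    · rintro ⟨hx1, hx2⟩
      obtain ⟨e0, easc⟩ := hx2 0 (by omega)
      rw [cns_mk_succ, cns_mk_zero] at e0 easc
      have hx00 : x ⟨0, by omega⟩ = x 0 := rfl
      rw [hx00] at e0 easc
      have hedge : (1 ≤ x 0 ∧ x 0 ≤ a) ∨ (x 0 = a + 1 ∧ m ≤ a + 1) := by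
        rcases le_or_gt (x 0) a with hle | hlt
        · exact Or.inl ⟨hx1 0, hle⟩
        · have hx0a : x 0 = a + 1 := by omega
          obtain ⟨hm, -⟩ := easc hlt
          exact Or.inr ⟨hx0a, by omega⟩
      refine ⟨x 0, Fin.tail x, hedge, ?_, (cns_tail x).symm⟩
      rw [ih (x 0) (max m (x 0)) (hx1 0) (le_max_right _ _)]
      refine ⟨fun i => hx1 i.succ, ?_⟩
      intro j h
      rw [cns_tail]
      obtain ⟨f1, f2⟩ := hx2 (j+1) (by omega)
      simp only [cns_mk_succ] at f1 f2
      refine ⟨f1, ?_⟩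
      intro hasc
      obtain ⟨hm, hall⟩ := f2 hasc
      constructor
      · refine max_le hm ?_
        have := hall 1 (by omega)
        rw [cns_mk_succ] at this
        exact le_trans (le_of_eq hx00.symm) this
      · intro i hi
        have := hall (i+1) (by omega)
        rw [cns_mk_succ] at this
        exact this

lemma P_iff (k : ℕ) (t : Fin k → ℕ) :
    (IsCatalanWord (cns 1 t) ∧ ¬ Contains3_12 (cns 1 t)) ↔ ((∀ i, 1 ≤ t i) ∧ Gd 1 1 t) := by
  constructor
  · rintro ⟨⟨hpos, h0, hstep⟩, havoid⟩
    refine ⟨fun i => (cns_succ 1 t i) ▸ hpos i.succ, ?_⟩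
    intro j h
    refine ⟨hstep j h, ?_⟩
    intro hasc
    refine ⟨hpos _, ?_⟩
    intro i hi
    rcases lt_or_eq_of_le hi with hij | rfl
    · by_contra hc
      push_neg at hc
      exact havoid ⟨i, j, h, hij, hasc, hc⟩
    · exact le_of_lt hasc
  · rintro ⟨ht1, hG⟩
    refine ⟨⟨one_le_cns le_rfl ht1, fun h => cns_mk_zero 1 t h, fun j h => (hG j h).1⟩, ?_⟩
    rintro ⟨i, j, hj, hij, h1, h2⟩
    obtain ⟨-, hall⟩ := (hG j hj).2 h1
    exact absurd h2 (not_lt.mpr (hall i (le_of_lt hij)))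

theorem catalan_avoid_3_12 (n : ℕ) (hn : 1 ≤ n) :
    2 * Set.ncard {w : Fin n → ℕ | IsCatalanWord w ∧ ¬ Contains3_12 w} =
      3 ^ (n - 1) + 1 := by
  obtain ⟨k, rfl⟩ : ∃ k, n = k + 1 := ⟨n - 1, by omega⟩
  have hset : {w : Fin (k+1) → ℕ | IsCatalanWord w ∧ ¬ Contains3_12 w}
      = ↑((F k 1 1).image (cns 1)) := by
    ext w
    simp only [Set.mem_setOf_eq, Finset.coe_image, Set.mem_image, Finset.mem_coe]
    constructor
    · rintro ⟨hc, ha⟩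
      have h0 : w 0 = 1 := by
        have := hc.2.1 (by omega)
        rwa [Fin.mk_zero] at this
      have hw : cns 1 (Fin.tail w) = w := by
        have h' := cns_tail w
        rwa [h0] at h'
      refine ⟨Fin.tail w, ?_, hw⟩
      rw [mem_F_iff k 1 1 le_rfl le_rfl]
      exact (P_iff k (Fin.tail w)).mp (by rw [hw]; exact ⟨hc, ha⟩)
    · rintro ⟨t, ht, rfl⟩
      exact (P_iff k t).mpr ((mem_F_iff k 1 1 le_rfl le_rfl t).mp ht)
  rw [hset, Set.ncard_coe_finset, Finset.card_image_of_injective _ (cns_inj 1), card_F]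
  simpa using two_H k
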